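/- arXiv:1111.7312 — 4 statements merged into one kernel-verified Lean document; each statement's English description precedes it below -/
import Mathlib

section
/- Let 1 ≤ p ≤ q and 1 ≤ r ≤ p. For every f ∈ L²_s(μ^p) and g ∈ L²_s(μ^q) (symmetric square-integrable kernels), one has ∫_{Z^{p+q-r}} (f ⋆_r^0 g)² dμ^{p+q-r} = ∫_{Z^r} (f ⋆_p^{p-r} f)(g ⋆_q^{q-r} g) dμ^r, whenever these contractions are well-defined. -/
/-! For fixed `γ` the integrand `f(γ, t)² g(γ, s)²` splits into a function of `t` times a
function of `s`, so the inner double integral is the product of the two inner integrals; the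
symmetry of `f` and `g` moves the identified block `γ` from the first to the last arguments. -/

open MeasureTheory

theorem Fin.append_comm_comp_finAddFlip {Z : Type*} {m n : ℕ}
    (x : Fin m → Z) (y : Fin n → Z) :
    (Fin.append y x ∘ Fin.cast (Nat.add_comm m n)) ∘
        finAddFlip.trans (finCongr (Nat.add_comm n m)) = Fin.append x y := by
  funext i
  rcases finSumFinEquiv.surjective i with ⟨j | j, rfl⟩
  · simp [finAddFlip_apply_castAdd]
  · simp [finAddFlip_apply_natAdd]

theorem apply_append_comm_of_perm_invariant {Z β : Type*} {m n : ℕ}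
    {f : (Fin (m + n) → Z) → β}
    (hf : ∀ (σ : Equiv.Perm (Fin (m + n))) (x : Fin (m + n) → Z), f (x ∘ σ) = f x)
    (x : Fin m → Z) (y : Fin n → Z) :
    f (Fin.append x y) = f (Fin.append y x ∘ Fin.cast (Nat.add_comm m n)) := by
  rw [← Fin.append_comm_comp_finAddFlip, hf]

theorem integral_integral_mul_sq {α β : Type*} [MeasurableSpace α] [MeasurableSpace β]
    (μ : Measure α) (ν : Measure β) (u : α → ℝ) (v : β → ℝ) :
    ∫ x, ∫ y, (u x * v y) ^ 2 ∂ν ∂μ = (∫ x, u x ^ 2 ∂μ) * ∫ y, v y ^ 2 ∂ν := by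
  simp_rw [mul_pow, integral_const_mul, integral_mul_const]

theorem contraction_star_r_zero_identity_general
    {Z : Type*} [MeasurableSpace Z] (μ : Measure Z)
    (r b c : ℕ)
    (f : (Fin (r + b) → Z) → ℝ) (g : (Fin (r + c) → Z) → ℝ)
    (hfs : ∀ (σ : Equiv.Perm (Fin (r + b))) (x : Fin (r + b) → Z), f (x ∘ σ) = f x)
    (hgs : ∀ (σ : Equiv.Perm (Fin (r + c))) (x : Fin (r + c) → Z), g (x ∘ σ) = g x) :
    (∫ γ : Fin r → Z, ∫ t : Fin b → Z, ∫ s : Fin c → Z,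
        (f (Fin.append γ t) * g (Fin.append γ s)) ^ 2
          ∂(Measure.pi fun _ : Fin c => μ) ∂(Measure.pi fun _ : Fin b => μ)
          ∂(Measure.pi fun _ : Fin r => μ))
      = ∫ γ : Fin r → Z,
          (∫ t : Fin b → Z, (f (Fin.append t γ ∘ Fin.cast (Nat.add_comm r b))) ^ 2
              ∂(Measure.pi fun _ : Fin b => μ)) *
          (∫ s : Fin c → Z, (g (Fin.append s γ ∘ Fin.cast (Nat.add_comm r c))) ^ 2
              ∂(Measure.pi fun _ : Fin c => μ))
          ∂(Measure.pi fun _ : Fin r => μ) := by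
  refine integral_congr_ae (ae_of_all _ fun γ => ?_)
  simp only [apply_append_comm_of_perm_invariant hfs γ, apply_append_comm_of_perm_invariant hgs γ]
  exact integral_integral_mul_sq _ _ _ _

/-- For `1 ≤ r ≤ p ≤ q` (here `p = r + b`, `q = r + c` with `b ≤ c`) and
symmetric kernels `f ∈ L²_s(μ^p)`, `g ∈ L²_s(μ^q)`:
`∫_{Z^{p+q-r}} (f ⋆_r^0 g)² dμ^{p+q-r} = ∫_{Z^r} (f ⋆_p^{p-r} f)(g ⋆_q^{q-r} g) dμ^r`. -/
theorem contraction_star_r_zero_identity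
    {Z : Type*} [MeasurableSpace Z] (μ : Measure Z) [SigmaFinite μ]
    (r b c : ℕ) (hr : 1 ≤ r) (hbc : b ≤ c)
    (f : (Fin (r + b) → Z) → ℝ) (g : (Fin (r + c) → Z) → ℝ)
    (hfm : Measurable f) (hgm : Measurable g)
    (hfs : ∀ (σ : Equiv.Perm (Fin (r + b))) (x : Fin (r + b) → Z), f (x ∘ σ) = f x)
    (hgs : ∀ (σ : Equiv.Perm (Fin (r + c))) (x : Fin (r + c) → Z), g (x ∘ σ) = g x)
    (hf : MemLp f 2 (Measure.pi fun _ : Fin (r + b) => μ))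
    (hg : MemLp g 2 (Measure.pi fun _ : Fin (r + c) => μ)) :
    (∫ γ : Fin r → Z, ∫ t : Fin b → Z, ∫ s : Fin c → Z,
        (f (Fin.append γ t) * g (Fin.append γ s)) ^ 2
          ∂(Measure.pi fun _ : Fin c => μ) ∂(Measure.pi fun _ : Fin b => μ)
          ∂(Measure.pi fun _ : Fin r => μ))
      = ∫ γ : Fin r → Z,
          (∫ t : Fin b → Z, (f (Fin.append t γ ∘ Fin.cast (Nat.add_comm r b))) ^ 2
              ∂(Measure.pi fun _ : Fin b => μ)) *
          (∫ s : Fin c → Z, (g (Fin.append s γ ∘ Fin.cast (Nat.add_comm r c))) ^ 2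
              ∂(Measure.pi fun _ : Fin c => μ))
          ∂(Measure.pi fun _ : Fin r => μ) :=
  contraction_star_r_zero_identity_general μ r b c f g hfs hgs
end

section
/- For symmetric kernels f ∈ L²_s(μ^p) and g ∈ L²_s(μ^q) with p, q ≥ 1, and for any r ∈ {1,…,p∧q} and l ∈ {1,…,r} such that the relevant contractions are square-integrable, one has ‖f ⋆_r^l g‖²_{L²(μ^{p+q-r-l})} ≤ ‖f ⋆_r^l f‖_{L²(μ^{2p-r-l})} · ‖g ⋆_r^l g‖_{L²(μ^{2q-r-l})}. -/
/-!
Fix the `r - l` identified but not integrated variables `γ` and write `h ⋆ k` for the contraction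
over the remaining common variables `x`. Fubini turns `‖h ⋆ k‖²` into the `L²(ν ⊗ ν)` pairing of
`A(x, x') = ∫ h(x, y) h(x', y) dy` and `B(x, x') = ∫ k(x, w) k(x', w) dw`, and the same identity
with `k = h` gives `‖A‖ = ‖h ⋆ h‖`; so Cauchy–Schwarz yields `‖h ⋆ k‖² ≤ ‖h ⋆ h‖ ‖k ⋆ k‖` for
almost every `γ`. Integrating in `γ` and applying Cauchy–Schwarz once more, now to the product of
the two norms on the right, gives the estimate.
-/

open MeasureTheory

section CauchySchwarz
variable {α : Type*} [MeasurableSpace α] {μ : Measure α}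

theorem integral_mul_le_sqrt_mul_sqrt {f g : α → ℝ} (hf : MemLp f 2 μ) (hg : MemLp g 2 μ) :
    ∫ a, f a * g a ∂μ ≤ √(∫ a, f a ^ 2 ∂μ) * √(∫ a, g a ^ 2 ∂μ) := by
  have hfg : Integrable (fun a => f a * g a) μ := hf.integrable_mul hg
  calc ∫ a, f a * g a ∂μ ≤ ∫ a, ‖f a‖ * ‖g a‖ ∂μ :=
        integral_mono hfg (hfg.norm.congr (ae_of_all _ fun a => norm_mul _ _))
          fun a => (le_abs_self _).trans_eq (abs_mul _ _)
    _ ≤ (∫ a, ‖f a‖ ^ (2 : ℝ) ∂μ) ^ (1 / (2 : ℝ)) * (∫ a, ‖g a‖ ^ (2 : ℝ) ∂μ) ^ (1 / (2 : ℝ)) :=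
        integral_mul_norm_le_Lp_mul_Lq .two_two (by simpa using hf) (by simpa using hg)
    _ = √(∫ a, f a ^ 2 ∂μ) * √(∫ a, g a ^ 2 ∂μ) := by
        simp only [Real.rpow_two, Real.norm_eq_abs, sq_abs, Real.sqrt_eq_rpow]

theorem MeasureTheory.Integrable.memLp_two_sqrt {Φ : α → ℝ} (hΦ : Integrable Φ μ)
    (hΦ0 : 0 ≤ᵐ[μ] Φ) :
    MemLp (fun a => √(Φ a)) 2 μ := by
  refine (memLp_two_iff_integrable_sq
    (Real.continuous_sqrt.comp_aestronglyMeasurable hΦ.aestronglyMeasurable)).2 ?_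
  exact hΦ.congr (hΦ0.mono fun a ha => (Real.sq_sqrt ha).symm)

theorem integral_sqrt_mul_sqrt_le {Φ Ψ : α → ℝ} (hΦ : Integrable Φ μ) (hΨ : Integrable Ψ μ)
    (hΦ0 : 0 ≤ᵐ[μ] Φ) (hΨ0 : 0 ≤ᵐ[μ] Ψ) :
    ∫ a, √(Φ a) * √(Ψ a) ∂μ ≤ √(∫ a, Φ a ∂μ) * √(∫ a, Ψ a ∂μ) := by
  have h := integral_mul_le_sqrt_mul_sqrt (hΦ.memLp_two_sqrt hΦ0) (hΨ.memLp_two_sqrt hΨ0)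
  rwa [integral_congr_ae (hΦ0.mono fun a ha => Real.sq_sqrt ha),
    integral_congr_ae (hΨ0.mono fun a ha => Real.sq_sqrt ha)] at h

end CauchySchwarz

section MeasurePreserving
variable {α β γ δ : Type*} [MeasurableSpace α] [MeasurableSpace β] [MeasurableSpace γ]
  [MeasurableSpace δ] (μa : Measure α) (μb : Measure β) (μc : Measure γ) (μd : Measure δ)
  [SigmaFinite μa] [SigmaFinite μb] [SigmaFinite μc] [SigmaFinite μd]

theorem measurePreserving_prodLeftComm :
    MeasurePreserving (fun q : α × β × γ => (q.2.1, q.1, q.2.2))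
      (μa.prod (μb.prod μc)) (μb.prod (μa.prod μc)) :=
  (measurePreserving_prodAssoc μb μa μc).comp <|
    (Measure.measurePreserving_swap.prod (MeasurePreserving.id μc)).comp <|
      (measurePreserving_prodAssoc μa μb μc).symm MeasurableEquiv.prodAssoc

theorem measurePreserving_prodProdProdComm :
    MeasurePreserving (fun q : (α × β) × γ × δ => ((q.1.1, q.2.1), (q.1.2, q.2.2)))
      ((μa.prod μb).prod (μc.prod μd)) ((μa.prod μc).prod (μb.prod μd)) :=
  ((measurePreserving_prodAssoc μa μc (μb.prod μd)).symm MeasurableEquiv.prodAssoc).comp <|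
    ((MeasurePreserving.id μa).prod (measurePreserving_prodLeftComm μb μc μd)).comp <|
      measurePreserving_prodAssoc μa μb (μc.prod μd)

end MeasurePreserving

section FinAppend
variable {Z : Type*} [MeasurableSpace Z] (μ : Measure Z) [SigmaFinite μ]

theorem measurePreserving_finAppend (m n : ℕ) :
    MeasurePreserving (fun p : (Fin m → Z) × (Fin n → Z) => Fin.append p.1 p.2)
      ((Measure.pi fun _ : Fin m => μ).prod (Measure.pi fun _ : Fin n => μ))
      (Measure.pi fun _ : Fin (m + n) => μ) := by
  convert (measurePreserving_piCongrLeft (fun _ => μ) finSumFinEquiv).comp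
    (measurePreserving_sumPiEquivProdPi_symm fun _ : Fin m ⊕ Fin n => μ) using 1
  ext p j
  obtain ⟨i | i, rfl⟩ := finSumFinEquiv.surjective j <;>
    simp only [Function.comp_apply, MeasurableEquiv.piCongrLeft, MeasurableEquiv.coe_mk,
      MeasurableEquiv.sumPiEquivProdPi, Equiv.piCongrLeft_apply_apply] <;> simp

theorem measurePreserving_finAppend_finAppend (l m a : ℕ) :
    MeasurePreserving (fun q : (Fin m → Z) × (Fin l → Z) × (Fin a → Z) =>
        Fin.append q.2.1 (Fin.append q.1 q.2.2))
      ((Measure.pi fun _ : Fin m => μ).prod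
        ((Measure.pi fun _ : Fin l => μ).prod (Measure.pi fun _ : Fin a => μ)))
      (Measure.pi fun _ : Fin (l + (m + a)) => μ) :=
  (measurePreserving_finAppend μ l (m + a)).comp <|
    ((MeasurePreserving.id _).prod (measurePreserving_finAppend μ m a)).comp <|
      measurePreserving_prodLeftComm _ _ _

end FinAppend

noncomputable def contraction {X Y W : Type*} [MeasurableSpace X] (ν : Measure X) (h : X → Y → ℝ)
    (k : X → W → ℝ) (y : Y) (w : W) : ℝ :=
  ∫ x, h x y * k x w ∂ν

section Contraction
variable {X Y W : Type*} [MeasurableSpace X] [MeasurableSpace Y] [MeasurableSpace W]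
  {ν : Measure X} {σ : Measure Y} {τ : Measure W} [SigmaFinite ν] [SigmaFinite σ] [SigmaFinite τ]
  {h : X → Y → ℝ} {k : X → W → ℝ}

/-- The integrand is `F(x, x', y, w) · F(x', x, y, w)` with `F(x, x', y, w) = h(x, y) k(x', w)`,
and `F` is square-integrable since `F²` is the tensor product of `h²` and `k²`. -/
theorem integrable_sq_contraction_integrand
    (hh : Measurable fun p : X × Y => h p.1 p.2) (hk : Measurable fun p : X × W => k p.1 p.2)
    (hh2 : Integrable (fun p : X × Y => h p.1 p.2 ^ 2) (ν.prod σ))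
    (hk2 : Integrable (fun p : X × W => k p.1 p.2 ^ 2) (ν.prod τ)) :
    Integrable (fun r : (X × X) × Y × W =>
        h r.1.1 r.2.1 * k r.1.1 r.2.2 * (h r.1.2 r.2.1 * k r.1.2 r.2.2))
      ((ν.prod ν).prod (σ.prod τ)) := by
  set F : (X × X) × Y × W → ℝ := fun r => h r.1.1 r.2.1 * k r.1.2 r.2.2
  have hFm : Measurable F :=
    (hh.comp (measurable_fst.fst.prodMk measurable_snd.fst)).mul
      (hk.comp (measurable_fst.snd.prodMk measurable_snd.snd))
  have hF : MemLp F 2 ((ν.prod ν).prod (σ.prod τ)) := by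
    refine (memLp_two_iff_integrable_sq hFm.aestronglyMeasurable).2 ?_
    have := (measurePreserving_prodProdProdComm ν ν σ τ).integrable_comp_of_integrable
      (hh2.mul_prod hk2)
    simpa only [F, mul_pow, Function.comp_def] using this
  have hF' : MemLp (F ∘ Prod.map Prod.swap id) 2 ((ν.prod ν).prod (σ.prod τ)) :=
    hF.comp_measurePreserving (Measure.measurePreserving_swap.prod (MeasurePreserving.id _))
  refine (hF.integrable_mul hF').congr (ae_of_all _ fun r => ?_)
  simp only [F, Pi.mul_apply, Function.comp_apply, Prod.map_fst, Prod.map_snd, Prod.fst_swap,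
    Prod.snd_swap, id]
  ring

theorem integrable_contraction_flip_mul
    (hh : Measurable fun p : X × Y => h p.1 p.2) (hk : Measurable fun p : X × W => k p.1 p.2)
    (hh2 : Integrable (fun p : X × Y => h p.1 p.2 ^ 2) (ν.prod σ))
    (hk2 : Integrable (fun p : X × W => k p.1 p.2 ^ 2) (ν.prod τ)) :
    Integrable (fun q : X × X =>
      contraction σ (flip h) (flip h) q.1 q.2 * contraction τ (flip k) (flip k) q.1 q.2)
      (ν.prod ν) := by
  refine (integrable_sq_contraction_integrand hh hk hh2 hk2).integral_prod_left.congr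
    (ae_of_all _ fun q => ?_)
  simp only [contraction, flip, ← integral_prod_mul]
  congr 1 with p
  ring

theorem memLp_contraction_flip_self (hh : Measurable fun p : X × Y => h p.1 p.2)
    (hh2 : Integrable (fun p : X × Y => h p.1 p.2 ^ 2) (ν.prod σ)) :
    MemLp (fun q : X × X => contraction σ (flip h) (flip h) q.1 q.2) 2 (ν.prod ν) := by
  have hm : StronglyMeasurable fun q : X × X => contraction σ (flip h) (flip h) q.1 q.2 :=
    StronglyMeasurable.integral_prod_right (f := fun (q : X × X) y => h q.1 y * h q.2 y)
      ((hh.comp (measurable_fst.fst.prodMk measurable_snd)).mul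
        (hh.comp (measurable_fst.snd.prodMk measurable_snd))).stronglyMeasurable
  refine (memLp_two_iff_integrable_sq hm.aestronglyMeasurable).2 ?_
  simpa only [sq] using integrable_contraction_flip_mul hh hh hh2 hh2

theorem integral_contraction_sq_eq
    (hh : Measurable fun p : X × Y => h p.1 p.2) (hk : Measurable fun p : X × W => k p.1 p.2)
    (hh2 : Integrable (fun p : X × Y => h p.1 p.2 ^ 2) (ν.prod σ))
    (hk2 : Integrable (fun p : X × W => k p.1 p.2 ^ 2) (ν.prod τ)) :
    ∫ p : Y × W, contraction ν h k p.1 p.2 ^ 2 ∂(σ.prod τ) =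
      ∫ q : X × X, contraction σ (flip h) (flip h) q.1 q.2 *
        contraction τ (flip k) (flip k) q.1 q.2 ∂(ν.prod ν) := by
  calc ∫ p : Y × W, contraction ν h k p.1 p.2 ^ 2 ∂(σ.prod τ)
      = ∫ p : Y × W, ∫ q : X × X, h q.1 p.1 * k q.1 p.2 * (h q.2 p.1 * k q.2 p.2)
          ∂(ν.prod ν) ∂(σ.prod τ) := by
        simp only [contraction, sq, ← integral_prod_mul]
    _ = ∫ q : X × X, ∫ p : Y × W, h q.1 p.1 * k q.1 p.2 * (h q.2 p.1 * k q.2 p.2)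
          ∂(σ.prod τ) ∂(ν.prod ν) :=
        integral_integral_swap (integrable_sq_contraction_integrand hh hk hh2 hk2).swap
    _ = _ := by
        simp only [contraction, flip, ← integral_prod_mul]
        congr 1 with q
        congr 1 with p
        ring

theorem integral_contraction_sq_le
    (hh : Measurable fun p : X × Y => h p.1 p.2) (hk : Measurable fun p : X × W => k p.1 p.2)
    (hh2 : Integrable (fun p : X × Y => h p.1 p.2 ^ 2) (ν.prod σ))
    (hk2 : Integrable (fun p : X × W => k p.1 p.2 ^ 2) (ν.prod τ)) :
    ∫ p : Y × W, contraction ν h k p.1 p.2 ^ 2 ∂(σ.prod τ) ≤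
      √(∫ p : Y × Y, contraction ν h h p.1 p.2 ^ 2 ∂(σ.prod σ)) *
        √(∫ p : W × W, contraction ν k k p.1 p.2 ^ 2 ∂(τ.prod τ)) := by
  rw [integral_contraction_sq_eq hh hk hh2 hk2, integral_contraction_sq_eq hh hh hh2 hh2,
    integral_contraction_sq_eq hk hk hk2 hk2]
  simpa only [sq] using integral_mul_le_sqrt_mul_sqrt (memLp_contraction_flip_self hh hh2)
    (memLp_contraction_flip_self hk hk2)

end Contraction

section FibredContraction
variable {Γ X Y W : Type*} [MeasurableSpace Γ] [MeasurableSpace X] [MeasurableSpace Y]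
  [MeasurableSpace W] {ρ : Measure Γ} {ν : Measure X} {σ : Measure Y} {τ : Measure W}
  [SigmaFinite ρ] [SigmaFinite ν] [SigmaFinite σ] [SigmaFinite τ]

theorem integral_integral_integral_eq_integral_integral_prod {F : Γ → Y → W → ℝ}
    (hF : Integrable (fun q : Γ × Y × W => F q.1 q.2.1 q.2.2) (ρ.prod (σ.prod τ))) :
    ∫ γ, ∫ y, ∫ w, F γ y w ∂τ ∂σ ∂ρ = ∫ γ, ∫ p : Y × W, F γ p.1 p.2 ∂(σ.prod τ) ∂ρ :=
  integral_congr_ae (hF.prod_right_ae.mono fun _ hγ => (integral_prod _ hγ).symm)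

theorem integral_integral_integral_contraction_sq_le {h : Γ → X → Y → ℝ} {k : Γ → X → W → ℝ}
    (hh : Measurable fun q : Γ × X × Y => h q.1 q.2.1 q.2.2)
    (hk : Measurable fun q : Γ × X × W => k q.1 q.2.1 q.2.2)
    (hh2 : Integrable (fun q : Γ × X × Y => h q.1 q.2.1 q.2.2 ^ 2) (ρ.prod (ν.prod σ)))
    (hk2 : Integrable (fun q : Γ × X × W => k q.1 q.2.1 q.2.2 ^ 2) (ρ.prod (ν.prod τ)))
    (hhk : Integrable (fun q : Γ × Y × W => contraction ν (h q.1) (k q.1) q.2.1 q.2.2 ^ 2)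
      (ρ.prod (σ.prod τ)))
    (hhh : Integrable (fun q : Γ × Y × Y => contraction ν (h q.1) (h q.1) q.2.1 q.2.2 ^ 2)
      (ρ.prod (σ.prod σ)))
    (hkk : Integrable (fun q : Γ × W × W => contraction ν (k q.1) (k q.1) q.2.1 q.2.2 ^ 2)
      (ρ.prod (τ.prod τ))) :
    ∫ γ, ∫ y, ∫ w, contraction ν (h γ) (k γ) y w ^ 2 ∂τ ∂σ ∂ρ ≤
      √(∫ γ, ∫ y, ∫ y', contraction ν (h γ) (h γ) y y' ^ 2 ∂σ ∂σ ∂ρ) *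
        √(∫ γ, ∫ w, ∫ w', contraction ν (k γ) (k γ) w w' ^ 2 ∂τ ∂τ ∂ρ) := by
  rw [integral_integral_integral_eq_integral_integral_prod hhk,
    integral_integral_integral_eq_integral_integral_prod hhh,
    integral_integral_integral_eq_integral_integral_prod hkk]
  have hfibre : ∀ᵐ γ ∂ρ,
      ∫ p : Y × W, contraction ν (h γ) (k γ) p.1 p.2 ^ 2 ∂(σ.prod τ) ≤
        √(∫ p : Y × Y, contraction ν (h γ) (h γ) p.1 p.2 ^ 2 ∂(σ.prod σ)) *
          √(∫ p : W × W, contraction ν (k γ) (k γ) p.1 p.2 ^ 2 ∂(τ.prod τ)) := by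
    filter_upwards [hh2.prod_right_ae, hk2.prod_right_ae] with γ hγh hγk
    exact integral_contraction_sq_le (hh.comp measurable_prodMk_left)
      (hk.comp measurable_prodMk_left) hγh hγk
  have hΦ0 : 0 ≤ᵐ[ρ] fun γ => ∫ p : Y × Y, contraction ν (h γ) (h γ) p.1 p.2 ^ 2 ∂(σ.prod σ) :=
    ae_of_all _ fun _ => integral_nonneg fun _ => sq_nonneg _
  have hΨ0 : 0 ≤ᵐ[ρ] fun γ => ∫ p : W × W, contraction ν (k γ) (k γ) p.1 p.2 ^ 2 ∂(τ.prod τ) :=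
    ae_of_all _ fun _ => integral_nonneg fun _ => sq_nonneg _
  have hΦ := hhh.integral_prod_left
  have hΨ := hkk.integral_prod_left
  calc _ ≤ _ := integral_mono_ae hhk.integral_prod_left
          ((hΦ.memLp_two_sqrt hΦ0).integrable_mul (hΨ.memLp_two_sqrt hΨ0)) hfibre
    _ ≤ _ := integral_sqrt_mul_sqrt_le hΦ hΨ hΦ0 hΨ0

end FibredContraction

theorem contraction_cauchy_schwarz_general
    {Z : Type*} [MeasurableSpace Z] (μ : Measure Z) [SigmaFinite μ]
    (l m a c : ℕ)
    (f : (Fin (l + (m + a)) → Z) → ℝ) (g : (Fin (l + (m + c)) → Z) → ℝ)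
    (hfm : Measurable f) (hgm : Measurable g)
    (hf : MemLp f 2 (Measure.pi fun _ : Fin (l + (m + a)) => μ))
    (hg : MemLp g 2 (Measure.pi fun _ : Fin (l + (m + c)) => μ))
    -- square-integrability of the contraction `f ⋆_r^l g`
    (hfg2 : Integrable (fun p : (Fin m → Z) × (Fin a → Z) × (Fin c → Z) =>
        (∫ z : Fin l → Z,
            f (Fin.append z (Fin.append p.1 p.2.1)) * g (Fin.append z (Fin.append p.1 p.2.2))
            ∂(Measure.pi fun _ : Fin l => μ)) ^ 2)
        ((Measure.pi fun _ : Fin m => μ).prod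
          ((Measure.pi fun _ : Fin a => μ).prod (Measure.pi fun _ : Fin c => μ))))
    -- square-integrability of the contraction `f ⋆_r^l f`
    (hff2 : Integrable (fun p : (Fin m → Z) × (Fin a → Z) × (Fin a → Z) =>
        (∫ z : Fin l → Z,
            f (Fin.append z (Fin.append p.1 p.2.1)) * f (Fin.append z (Fin.append p.1 p.2.2))
            ∂(Measure.pi fun _ : Fin l => μ)) ^ 2)
        ((Measure.pi fun _ : Fin m => μ).prod
          ((Measure.pi fun _ : Fin a => μ).prod (Measure.pi fun _ : Fin a => μ))))
    -- square-integrability of the contraction `g ⋆_r^l g`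
    (hgg2 : Integrable (fun p : (Fin m → Z) × (Fin c → Z) × (Fin c → Z) =>
        (∫ z : Fin l → Z,
            g (Fin.append z (Fin.append p.1 p.2.1)) * g (Fin.append z (Fin.append p.1 p.2.2))
            ∂(Measure.pi fun _ : Fin l => μ)) ^ 2)
        ((Measure.pi fun _ : Fin m => μ).prod
          ((Measure.pi fun _ : Fin c => μ).prod (Measure.pi fun _ : Fin c => μ)))) :
    (∫ γ : Fin m → Z, ∫ t : Fin a → Z, ∫ s : Fin c → Z,
        (∫ z : Fin l → Z,
            f (Fin.append z (Fin.append γ t)) * g (Fin.append z (Fin.append γ s))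
            ∂(Measure.pi fun _ : Fin l => μ)) ^ 2
        ∂(Measure.pi fun _ : Fin c => μ) ∂(Measure.pi fun _ : Fin a => μ)
        ∂(Measure.pi fun _ : Fin m => μ))
      ≤ Real.sqrt (∫ γ : Fin m → Z, ∫ t : Fin a → Z, ∫ t' : Fin a → Z,
            (∫ z : Fin l → Z,
                f (Fin.append z (Fin.append γ t)) * f (Fin.append z (Fin.append γ t'))
                ∂(Measure.pi fun _ : Fin l => μ)) ^ 2
            ∂(Measure.pi fun _ : Fin a => μ) ∂(Measure.pi fun _ : Fin a => μ)
            ∂(Measure.pi fun _ : Fin m => μ)) *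
        Real.sqrt (∫ γ : Fin m → Z, ∫ s : Fin c → Z, ∫ s' : Fin c → Z,
            (∫ z : Fin l → Z,
                g (Fin.append z (Fin.append γ s)) * g (Fin.append z (Fin.append γ s'))
                ∂(Measure.pi fun _ : Fin l => μ)) ^ 2
            ∂(Measure.pi fun _ : Fin c => μ) ∂(Measure.pi fun _ : Fin c => μ)
            ∂(Measure.pi fun _ : Fin m => μ)) := by
  have hTf := measurePreserving_finAppend_finAppend μ l m a
  have hTg := measurePreserving_finAppend_finAppend μ l m c
  exact integral_integral_integral_contraction_sq_le (hfm.comp hTf.measurable)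
    (hgm.comp hTg.measurable) (hTf.integrable_comp_of_integrable hf.integrable_sq)
    (hTg.integrable_comp_of_integrable hg.integrable_sq) hfg2 hff2 hgg2

/-- Cauchy–Schwarz estimate for contractions: for symmetric square-integrable
kernels `f ∈ L²_s(μ^p)`, `g ∈ L²_s(μ^q)` (here `p = l + (m + a)`, `q = l + (m + c)`,
`r = l + m`, with `1 ≤ l ≤ r ≤ p ∧ q`), if the relevant contractions are square-integrable then
`‖f ⋆_r^l g‖² ≤ ‖f ⋆_r^l f‖ ⋅ ‖g ⋆_r^l g‖`. -/
theorem contraction_cauchy_schwarz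
    {Z : Type*} [MeasurableSpace Z] (μ : Measure Z) [SigmaFinite μ]
    (l m a c : ℕ) (hl : 1 ≤ l)
    (f : (Fin (l + (m + a)) → Z) → ℝ) (g : (Fin (l + (m + c)) → Z) → ℝ)
    (hfm : Measurable f) (hgm : Measurable g)
    (hfs : ∀ (σ : Equiv.Perm (Fin (l + (m + a)))) (x), f (x ∘ σ) = f x)
    (hgs : ∀ (σ : Equiv.Perm (Fin (l + (m + c)))) (x), g (x ∘ σ) = g x)
    (hf : MemLp f 2 (Measure.pi fun _ : Fin (l + (m + a)) => μ))
    (hg : MemLp g 2 (Measure.pi fun _ : Fin (l + (m + c)) => μ))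
    -- square-integrability of the contraction `f ⋆_r^l g`
    (hfg2 : Integrable (fun p : (Fin m → Z) × (Fin a → Z) × (Fin c → Z) =>
        (∫ z : Fin l → Z,
            f (Fin.append z (Fin.append p.1 p.2.1)) * g (Fin.append z (Fin.append p.1 p.2.2))
            ∂(Measure.pi fun _ : Fin l => μ)) ^ 2)
        ((Measure.pi fun _ : Fin m => μ).prod
          ((Measure.pi fun _ : Fin a => μ).prod (Measure.pi fun _ : Fin c => μ))))
    -- square-integrability of the contraction `f ⋆_r^l f`
    (hff2 : Integrable (fun p : (Fin m → Z) × (Fin a → Z) × (Fin a → Z) =>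
        (∫ z : Fin l → Z,
            f (Fin.append z (Fin.append p.1 p.2.1)) * f (Fin.append z (Fin.append p.1 p.2.2))
            ∂(Measure.pi fun _ : Fin l => μ)) ^ 2)
        ((Measure.pi fun _ : Fin m => μ).prod
          ((Measure.pi fun _ : Fin a => μ).prod (Measure.pi fun _ : Fin a => μ))))
    -- square-integrability of the contraction `g ⋆_r^l g`
    (hgg2 : Integrable (fun p : (Fin m → Z) × (Fin c → Z) × (Fin c → Z) =>
        (∫ z : Fin l → Z,
            g (Fin.append z (Fin.append p.1 p.2.1)) * g (Fin.append z (Fin.append p.1 p.2.2))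
            ∂(Measure.pi fun _ : Fin l => μ)) ^ 2)
        ((Measure.pi fun _ : Fin m => μ).prod
          ((Measure.pi fun _ : Fin c => μ).prod (Measure.pi fun _ : Fin c => μ)))) :
    (∫ γ : Fin m → Z, ∫ t : Fin a → Z, ∫ s : Fin c → Z,
        (∫ z : Fin l → Z,
            f (Fin.append z (Fin.append γ t)) * g (Fin.append z (Fin.append γ s))
            ∂(Measure.pi fun _ : Fin l => μ)) ^ 2
        ∂(Measure.pi fun _ : Fin c => μ) ∂(Measure.pi fun _ : Fin a => μ)
        ∂(Measure.pi fun _ : Fin m => μ))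
      ≤ Real.sqrt (∫ γ : Fin m → Z, ∫ t : Fin a → Z, ∫ t' : Fin a → Z,
            (∫ z : Fin l → Z,
                f (Fin.append z (Fin.append γ t)) * f (Fin.append z (Fin.append γ t'))
                ∂(Measure.pi fun _ : Fin l => μ)) ^ 2
            ∂(Measure.pi fun _ : Fin a => μ) ∂(Measure.pi fun _ : Fin a => μ)
            ∂(Measure.pi fun _ : Fin m => μ)) *
        Real.sqrt (∫ γ : Fin m → Z, ∫ s : Fin c → Z, ∫ s' : Fin c → Z,
            (∫ z : Fin l → Z,
                g (Fin.append z (Fin.append γ s)) * g (Fin.append z (Fin.append γ s'))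
                ∂(Measure.pi fun _ : Fin l => μ)) ^ 2
            ∂(Measure.pi fun _ : Fin c => μ) ∂(Measure.pi fun _ : Fin c => μ)
            ∂(Measure.pi fun _ : Fin m => μ)) :=
  contraction_cauchy_schwarz_general μ l m a c f g hfm hgm hf hg hfg2 hff2 hgg2
end

section
/- Let N ~ 𝒩(0, σ²) and N' ~ 𝒩(0, τ²) be centered Gaussian random variables with σ, τ > 0. Then the Wasserstein-1 distance between their laws satisfies d_W(N, N') ≤ (√(2/π) / max(σ, τ)) · |σ² − τ²|. -/
open MeasureTheory ProbabilityTheory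
open scoped NNReal

/-- The Wasserstein-1 distance between two laws on `ℝ`:
`d_W(μ, ν) = sup_{f 1-Lipschitz} |∫ f dμ − ∫ f dν|`. -/
noncomputable def wassersteinDist (μ ν : Measure ℝ) : ℝ :=
  ⨆ f : {f : ℝ → ℝ // LipschitzWith 1 f}, |(∫ x, f.1 x ∂μ) - ∫ x, f.1 x ∂ν|

/-!
Couple the two laws through one standard Gaussian `Z`: `σ Z ∼ 𝒩(0, σ²)` and `τ Z ∼ 𝒩(0, τ²)`.
For a 1-Lipschitz `f`, `|E f(σZ) − E f(τZ)| ≤ |σ − τ| E|Z| = |σ − τ| √(2/π)`, and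
`|σ − τ| ≤ |σ² − τ²| / max(σ, τ)` because `max(σ, τ) ≤ σ + τ`.
-/

open Real Set

lemma integral_Ioi_mul_exp_neg_mul_sq {b : ℝ} (hb : 0 < b) :
    ∫ r in Ioi 0, r * exp (-b * r ^ 2) = (2 * b)⁻¹ := by
  have h := integral_mul_cexp_neg_mul_sq (b := (b : ℂ)) (by simpa using hb)
  apply Complex.ofReal_injective
  rw [← integral_complex_ofReal]
  push_cast
  exact h

lemma integral_abs_gaussianReal_zero_one : ∫ x, |x| ∂gaussianReal 0 1 = √(2 / π) := by
  have hpdf : ∀ x, gaussianPDFReal 0 1 x • |x|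
      = (√(2 * π))⁻¹ * (|x| * exp (-(1 / 2) * |x| ^ 2)) := by
    intro x
    simp only [gaussianPDFReal, smul_eq_mul, sq_abs, sub_zero, NNReal.coe_one, mul_one]
    ring_nf
  rw [integral_gaussianReal_eq_integral_smul one_ne_zero]
  simp_rw [hpdf]
  rw [integral_const_mul, integral_comp_abs (f := fun r => r * exp (-(1 / 2) * r ^ 2)),
    integral_Ioi_mul_exp_neg_mul_sq (by norm_num), sqrt_div' _ pi_pos.le, sqrt_mul' _ pi_pos.le]
  field_simp
  exact (sq_sqrt zero_le_two).symm

theorem LipschitzWith.integrable_comp {Ω E F : Type*} [MeasurableSpace Ω] {P : Measure Ω}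
    [IsFiniteMeasure P] [NormedAddCommGroup E] [NormedAddCommGroup F] {K : ℝ≥0} {f : E → F}
    (hf : LipschitzWith K f) {X : Ω → E} (hX : Integrable X P) :
    Integrable (fun ω => f (X ω)) P := by
  refine Integrable.mono' ((integrable_const ‖f 0‖).add (hX.norm.const_mul K))
    (hf.continuous.comp_aestronglyMeasurable hX.1) (Filter.Eventually.of_forall fun ω => ?_)
  have hlip : ‖f (X ω) - f 0‖ ≤ K * ‖X ω‖ := by simpa using hf.norm_sub_le (X ω) 0
  simp only [Pi.add_apply]
  linarith [norm_le_norm_add_norm_sub' (f (X ω)) (f 0)]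

theorem wassersteinDist_map_le_integral_abs_sub {Ω : Type*} [MeasurableSpace Ω]
    {P : Measure Ω} [IsFiniteMeasure P] {X Y : Ω → ℝ} (hX : Integrable X P) (hY : Integrable Y P) :
    wassersteinDist (P.map X) (P.map Y) ≤ ∫ ω, |X ω - Y ω| ∂P := by
  have : Nonempty {f : ℝ → ℝ // LipschitzWith 1 f} := ⟨⟨id, LipschitzWith.id⟩⟩
  refine ciSup_le fun ⟨f, hf⟩ => ?_
  have hfX := hf.integrable_comp hX
  have hfY := hf.integrable_comp hY
  rw [integral_map hX.aemeasurable hf.continuous.aestronglyMeasurable,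
    integral_map hY.aemeasurable hf.continuous.aestronglyMeasurable, ← integral_sub hfX hfY]
  calc |∫ ω, (f (X ω) - f (Y ω)) ∂P| ≤ ∫ ω, |f (X ω) - f (Y ω)| ∂P :=
        abs_integral_le_integral_abs
    _ ≤ ∫ ω, |X ω - Y ω| ∂P :=
        integral_mono (hfX.sub hfY).abs (hX.sub hY).abs fun ω => by
          simpa [← Real.dist_eq] using hf.dist_le_mul (X ω) (Y ω)

lemma gaussianReal_zero_sq_eq_map (σ : ℝ≥0) :
    gaussianReal 0 (σ ^ 2) = (gaussianReal 0 1).map ((σ : ℝ) * ·) := by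
  rw [gaussianReal_map_const_mul, mul_zero, mul_one]
  congr

theorem wassersteinDist_gaussianReal_le (σ τ : ℝ≥0) :
    wassersteinDist (gaussianReal 0 (σ ^ 2)) (gaussianReal 0 (τ ^ 2))
      ≤ √(2 / π) * |(σ : ℝ) - τ| := by
  have hZ : Integrable id (gaussianReal 0 1) :=
    memLp_one_iff_integrable.1 (memLp_id_gaussianReal 1)
  rw [gaussianReal_zero_sq_eq_map, gaussianReal_zero_sq_eq_map]
  refine (wassersteinDist_map_le_integral_abs_sub (hZ.const_mul _) (hZ.const_mul _)).trans_eq ?_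
  simp_rw [id, ← sub_mul, abs_mul, integral_const_mul, integral_abs_gaussianReal_zero_one, mul_comm]

lemma abs_sub_le_abs_sq_sub_sq_div_max {s t : ℝ} (hs : 0 ≤ s) (ht : 0 ≤ t) :
    |s - t| ≤ |s ^ 2 - t ^ 2| / max s t := by
  rcases (hs.trans (le_max_left s t)).eq_or_lt with hm | hm
  · obtain ⟨rfl, rfl⟩ : s = 0 ∧ t = 0 := by
      constructor <;> linarith [le_max_left s t, le_max_right s t]
    simp
  rw [le_div_iff₀ hm, sq_sub_sq, abs_mul, abs_of_nonneg (add_nonneg hs ht), mul_comm]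
  exact mul_le_mul_of_nonneg_right (max_le_add_of_nonneg hs ht) (abs_nonneg _)

theorem wasserstein_gaussian_bound_general (σ τ : ℝ≥0) :
    wassersteinDist (gaussianReal 0 (σ ^ 2)) (gaussianReal 0 (τ ^ 2))
      ≤ Real.sqrt (2 / Real.pi) / max (σ : ℝ) (τ : ℝ) * |(σ : ℝ) ^ 2 - (τ : ℝ) ^ 2| := by
  calc wassersteinDist (gaussianReal 0 (σ ^ 2)) (gaussianReal 0 (τ ^ 2))
      ≤ √(2 / π) * |(σ : ℝ) - τ| := wassersteinDist_gaussianReal_le σ τ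
    _ ≤ √(2 / π) * (|(σ : ℝ) ^ 2 - (τ : ℝ) ^ 2| / max (σ : ℝ) τ) :=
        mul_le_mul_of_nonneg_left (abs_sub_le_abs_sq_sub_sq_div_max σ.2 τ.2) (sqrt_nonneg _)
    _ = √(2 / π) / max (σ : ℝ) τ * |(σ : ℝ) ^ 2 - (τ : ℝ) ^ 2| := by ring

/-- For centered Gaussians `N ∼ 𝒩(0,σ²)` and `N' ∼ 𝒩(0,τ²)` with `σ, τ > 0`,
`d_W(N, N') ≤ (√(2/π) / max(σ,τ)) ⋅ |σ² − τ²|`. -/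
theorem wasserstein_gaussian_bound (σ τ : ℝ≥0) (hσ : 0 < σ) (hτ : 0 < τ) :
    wassersteinDist (gaussianReal 0 (σ ^ 2)) (gaussianReal 0 (τ ^ 2))
      ≤ Real.sqrt (2 / Real.pi) / max (σ : ℝ) (τ : ℝ) * |(σ : ℝ) ^ 2 - (τ : ℝ) ^ 2| :=
  wasserstein_gaussian_bound_general σ τ
end

section
/- Let W = [−1/2, 1/2]^d, Ŵ = [−1, 1]^d, W̌ = [−1/4, 1/4]^d, and H̄ ⊂ ℝ^d measurable. Then 2^{−d} ℓ(H̄ ∩ W̌)² ≤ ∫_{W³} 1_{x₁−x₂ ∈ H̄} 1_{x₁−x₃ ∈ H̄} dx₁dx₂dx₃ ≤ 2^d ℓ(H̄ ∩ Ŵ)², where ℓ denotes Lebesgue measure on ℝ^d. -/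
/-!
Slicing along `x₁`, the fibre of the cherry set over `x₁ ∈ W` is `A(x₁) × A(x₁)` with
`A(x₁) = {y ∈ W | x₁ - y ∈ H}`. As `y ↦ x₁ - y` preserves Lebesgue measure and `W - W ⊆ Ŵ`,
every `A(x₁)` has measure at most `ℓ(H ∩ Ŵ)`; as `W̌ - W̌ ⊆ W`, for `x₁ ∈ W̌` it has measure
at least `ℓ(H ∩ W̌)`. Integrating over `x₁ ∈ W`, resp. `x₁ ∈ W̌`, gives both bounds.
-/

open MeasureTheory
open scoped ENNReal
open Set

theorem sub_mem_Icc_neg {α : Type*} [AddCommGroup α] [PartialOrder α] [IsOrderedAddMonoid α]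
    {a b x y : α} (c : α) (hc : a + b ≤ c) (hx : x ∈ Icc (-a) a) (hy : y ∈ Icc (-b) b) :
    x - y ∈ Icc (-c) c := by
  rw [sub_eq_add_neg]
  refine ⟨?_, ?_⟩
  · calc -c ≤ -(a + b) := neg_le_neg hc
      _ = -a + -b := neg_add _ _
      _ ≤ x + -y := add_le_add hx.1 (neg_le_neg hy.2)
  · calc x + -y ≤ a + b := add_le_add hx.2 (neg_le.mp hy.1)
      _ ≤ c := hc

theorem Real.volume_Icc_neg_const_pi (ι : Type*) [Fintype ι] (a : ℝ) :
    volume (Icc (fun _ : ι => -a) fun _ => a) = ENNReal.ofReal (2 * a) ^ Fintype.card ι := by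
  rw [Real.volume_Icc_pi, Finset.prod_const, Finset.card_univ, sub_neg_eq_add, two_mul]

section Cherry

variable {G : Type*} [AddCommGroup G] [MeasurableSpace G]

def cherrySet (W H : Set G) : Set (G × G × G) :=
  {p | p.1 ∈ W ∧ p.2.1 ∈ W ∧ p.2.2 ∈ W ∧ p.1 - p.2.1 ∈ H ∧ p.1 - p.2.2 ∈ H}

theorem measurableSet_cherrySet [MeasurableSub₂ G] {W H : Set G} (hW : MeasurableSet W)
    (hH : MeasurableSet H) : MeasurableSet (cherrySet W H) := by
  unfold cherrySet
  measurability

theorem measure_cherrySet (μ : Measure G) [SFinite μ] [MeasurableSub₂ G] {W H : Set G}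
    (hW : MeasurableSet W) (hH : MeasurableSet H) :
    (μ.prod (μ.prod μ)) (cherrySet W H) = ∫⁻ x in W, μ (W ∩ (x - ·) ⁻¹' H) ^ 2 ∂μ := by
  rw [Measure.prod_apply (measurableSet_cherrySet hW hH), ← lintegral_indicator hW]
  congr 1 with x
  by_cases hx : x ∈ W
  · have hslice : Prod.mk x ⁻¹' cherrySet W H = (W ∩ (x - ·) ⁻¹' H) ×ˢ (W ∩ (x - ·) ⁻¹' H) := by
      ext; simp only [cherrySet, mem_preimage, mem_ofPred_eq, mem_prod, mem_inter_iff]; tauto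
    rw [hslice, Measure.prod_prod, indicator_of_mem hx, sq]
  · have hslice : Prod.mk x ⁻¹' cherrySet W H = ∅ := by
      ext; simp [cherrySet, hx]
    rw [hslice, measure_empty, indicator_of_notMem hx]

variable [MeasurableAdd G] [MeasurableNeg G] (μ : Measure G) [μ.IsNegInvariant]
  [μ.IsAddLeftInvariant]

theorem measure_preimage_sub_left (x : G) (s : Set G) : μ ((x - ·) ⁻¹' s) = μ s :=
  MeasurePreserving.measure_preimage_equiv (f := MeasurableEquiv.subLeft x)
    (Measure.measurePreserving_sub_left μ x) s

theorem measure_inter_le_measure_inter_preimage_sub_left {W H V : Set G} {x : G}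
    (hx : ∀ v ∈ V, x - v ∈ W) : μ (H ∩ V) ≤ μ (W ∩ (x - ·) ⁻¹' H) := by
  rw [← measure_preimage_sub_left μ x (H ∩ V)]
  refine measure_mono fun y hy => ⟨?_, hy.1⟩
  simpa using hx _ hy.2

theorem measure_inter_preimage_sub_left_le {W H V : Set G} {x : G}
    (hx : ∀ y ∈ W, x - y ∈ V) : μ (W ∩ (x - ·) ⁻¹' H) ≤ μ (H ∩ V) := by
  rw [← measure_preimage_sub_left μ x (H ∩ V)]
  exact measure_mono fun y hy => ⟨hy.2, hx y hy.1⟩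

variable [SFinite μ] [MeasurableSub₂ G] {W H : Set G}

theorem measure_cherrySet_le (hW : MeasurableSet W) (hH : MeasurableSet H) {V : Set G}
    (hWV : ∀ x ∈ W, ∀ y ∈ W, x - y ∈ V) :
    (μ.prod (μ.prod μ)) (cherrySet W H) ≤ μ W * μ (H ∩ V) ^ 2 := by
  calc (μ.prod (μ.prod μ)) (cherrySet W H) = ∫⁻ x in W, μ (W ∩ (x - ·) ⁻¹' H) ^ 2 ∂μ :=
        measure_cherrySet μ hW hH
    _ ≤ ∫⁻ _ in W, μ (H ∩ V) ^ 2 ∂μ := setLIntegral_mono' hW fun x hx =>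
        pow_le_pow_left' (measure_inter_preimage_sub_left_le μ (hWV x hx)) 2
    _ = μ W * μ (H ∩ V) ^ 2 := by rw [setLIntegral_const, mul_comm]

theorem le_measure_cherrySet (hW : MeasurableSet W) (hH : MeasurableSet H) {U V : Set G}
    (hU : MeasurableSet U) (hUW : U ⊆ W) (hUV : ∀ x ∈ U, ∀ v ∈ V, x - v ∈ W) :
    μ U * μ (H ∩ V) ^ 2 ≤ (μ.prod (μ.prod μ)) (cherrySet W H) := by
  calc μ U * μ (H ∩ V) ^ 2 = ∫⁻ _ in U, μ (H ∩ V) ^ 2 ∂μ := by rw [setLIntegral_const, mul_comm]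
    _ ≤ ∫⁻ x in U, μ (W ∩ (x - ·) ⁻¹' H) ^ 2 ∂μ := setLIntegral_mono' hU fun x hx =>
        pow_le_pow_left' (measure_inter_le_measure_inter_preimage_sub_left μ (hUV x hx)) 2
    _ ≤ ∫⁻ x in W, μ (W ∩ (x - ·) ⁻¹' H) ^ 2 ∂μ := lintegral_mono_set hUW
    _ = (μ.prod (μ.prod μ)) (cherrySet W H) := (measure_cherrySet μ hW hH).symm

end Cherry

/-- With `W = [−1/2,1/2]^d`, `Ŵ = [−1,1]^d`, `W̌ = [−1/4,1/4]^d` and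
`H̄ ⊂ ℝ^d` measurable, `2^{−d} ℓ(H̄ ∩ W̌)² ≤ ℓ³{(x₁,x₂,x₃) ∈ W³ : x₁−x₂ ∈ H̄, x₁−x₃ ∈ H̄}
≤ 2^d ℓ(H̄ ∩ Ŵ)²`. -/
theorem cherry_measure_sandwich (d : ℕ)
    (H : Set (Fin d → ℝ)) (hH : MeasurableSet H)
    (W Wh Wc : Set (Fin d → ℝ))
    (hW : W = Set.Icc (fun _ => -(1 / 2 : ℝ)) fun _ => 1 / 2)
    (hWh : Wh = Set.Icc (fun _ => -(1 : ℝ)) fun _ => 1)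
    (hWc : Wc = Set.Icc (fun _ => -(1 / 4 : ℝ)) fun _ => 1 / 4)
    (S : Set ((Fin d → ℝ) × (Fin d → ℝ) × (Fin d → ℝ)))
    (hS : S = {p | p.1 ∈ W ∧ p.2.1 ∈ W ∧ p.2.2 ∈ W ∧
        p.1 - p.2.1 ∈ H ∧ p.1 - p.2.2 ∈ H}) :
    (2 : ℝ≥0∞)⁻¹ ^ d * volume (H ∩ Wc) ^ 2 ≤ volume S ∧
      volume S ≤ (2 : ℝ≥0∞) ^ d * volume (H ∩ Wh) ^ 2 := by
  change S = cherrySet W H at hS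
  subst hS
  have hW_meas : MeasurableSet W := hW ▸ measurableSet_Icc
  have hWc_meas : MeasurableSet Wc := hWc ▸ measurableSet_Icc
  have hWc_sub_W : Wc ⊆ W := by
    rw [hWc, hW]; exact Icc_subset_Icc (fun _ => by norm_num) fun _ => by norm_num
  have hWc_sub_Wc_W : ∀ x ∈ Wc, ∀ v ∈ Wc, x - v ∈ W := by
    rw [hWc, hW]; exact fun x hx v hv => sub_mem_Icc_neg _ (fun _ => by norm_num) hx hv
  have hW_sub_W_Wh : ∀ x ∈ W, ∀ y ∈ W, x - y ∈ Wh := by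
    rw [hW, hWh]; exact fun x hx y hy => sub_mem_Icc_neg _ (fun _ => by norm_num) hx hy
  have hvol_Wc : volume Wc = (2 : ℝ≥0∞)⁻¹ ^ d := by
    rw [hWc, Real.volume_Icc_neg_const_pi, Fintype.card_fin,
      show (2 : ℝ) * (1 / 4) = 2⁻¹ by norm_num, ENNReal.ofReal_inv_of_pos two_pos,
      ENNReal.ofReal_ofNat]
  have hvol_W : volume W = 1 := by rw [hW, Real.volume_Icc_neg_const_pi]; norm_num
  constructor
  · rw [← hvol_Wc]
    exact le_measure_cherrySet volume hW_meas hH hWc_meas hWc_sub_W hWc_sub_Wc_W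
  · calc volume (cherrySet W H) ≤ volume W * volume (H ∩ Wh) ^ 2 :=
          measure_cherrySet_le volume hW_meas hH hW_sub_W_Wh
      _ ≤ (2 : ℝ≥0∞) ^ d * volume (H ∩ Wh) ^ 2 := by
          rw [hvol_W]; exact mul_le_mul_left (one_le_pow₀ one_le_two) _
end
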